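/- Let G = (V, E) be a 2-regular graph with vertex partition V = V_1 ∪ … ∪ V_h where h ≥ 2 is even and |V_i| = 3 for every i ∈ {1,…,h} (so |E| = |V| = 3h and |V| is even). Construct the approval election: for every color i ∈ {1,…,h} there are |E|/2 color-i-voters and, for every vertex u ∈ V_i, a vertex-candidate c_u approved by all color-i-voters; for every edge e = {u, u'} ∈ E there is an edge-candidate c_e and an edge-voter v_e whose ballot consists exactly of c_e, c_u, c_{u'} and two dummy-candidates d_1, d_2 (so d_1 and d_2 are approved by precisely the edge-voters); and there are |E|²/2 − |E|·h − |E| filling-voters, each approving a single distinct filling-candidate. The committee size is k = |E| − h, and the total number of voters is n = h·|E|/2 + |E| + |E|²/2 − h·|E| − |E|, so n/k = |E|/2. Then G has an independent set V' with |V' ∩ V_i| = 1 for every i ∈ {1,…,h} if and only if this election admits a committee of size k that satisfies JR but does not satisfy EJR+ (equivalently, that satisfies JR but violates 2-EJR+). -/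

import Mathlib

open Finset
open scoped Classical

/-- The set of approvers of candidate `c`. -/
noncomputable def approvers {V C : Type*} [Fintype V] (A : V → Finset C) (c : C) :
    Finset V :=
  Finset.univ.filter fun i => c ∈ A i

/-- `W` satisfies `t`-EJR+ in the election with ballots `A` and committee size `k`. -/
def satisfiesTEJRplus {V C : Type*} [Fintype V] [DecidableEq C]
    (A : V → Finset C) (k t : ℕ) (W : Finset C) : Prop :=
  ∀ c : C, c ∉ W → ∀ ℓ : ℕ, 1 ≤ ℓ → ℓ ≤ t →
    ∀ N' : Finset V, N' ⊆ approvers A c →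
      ((ℓ : ℚ) * (Fintype.card V : ℚ)) / (k : ℚ) ≤ (N'.card : ℚ) →
      ∃ i ∈ N', ℓ ≤ (A i ∩ W).card

/-- `W` satisfies JR iff it satisfies `1`-EJR+. -/
def satisfiesJR {V C : Type*} [Fintype V] [DecidableEq C]
    (A : V → Finset C) (k : ℕ) (W : Finset C) : Prop :=
  satisfiesTEJRplus A k 1 W

/-- The number of filling voters (= filling candidates): `|E|²/2 − |E|·h − |E|`. -/
abbrev fillCount {V : Type*} [Fintype V] [DecidableEq V]
    (G : SimpleGraph V) [DecidableRel G.Adj] (h : ℕ) : ℕ :=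
  G.edgeFinset.card ^ 2 / 2 - G.edgeFinset.card * h - G.edgeFinset.card

/-- Voters: for each color `i ∈ Fin h`, `|E|/2` color-`i`-voters; one edge-voter per
edge; and `|E|²/2 − |E|·h − |E|` filling-voters. -/
abbrev Voter10 {V : Type*} [Fintype V] [DecidableEq V]
    (G : SimpleGraph V) [DecidableRel G.Adj] (h : ℕ) : Type _ :=
  (Fin h × Fin (G.edgeFinset.card / 2)) ⊕
    ({e : Sym2 V // e ∈ G.edgeFinset} ⊕ Fin (fillCount G h))

/-- Candidates: one vertex-candidate per vertex, one edge-candidate per edge, two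
dummy-candidates, and one filling-candidate per filling-voter. -/
abbrev Cand10 {V : Type*} [Fintype V] [DecidableEq V]
    (G : SimpleGraph V) [DecidableRel G.Adj] (h : ℕ) : Type _ :=
  V ⊕ ({e : Sym2 V // e ∈ G.edgeFinset} ⊕ (Fin 2 ⊕ Fin (fillCount G h)))

/-- Ballots: a color-`i`-voter approves all vertex-candidates of vertices of color `i`;
the edge-voter of `e = {u,u'}` approves the edge-candidate `c_e`, the two
vertex-candidates `c_u, c_{u'}`, and both dummy-candidates; the `j`-th filling-voter
approves exactly the `j`-th filling-candidate. -/
noncomputable def ballot10 {V : Type*} [Fintype V] [DecidableEq V]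
    (G : SimpleGraph V) [DecidableRel G.Adj] (h : ℕ) (col : V → Fin h) :
    Voter10 G h → Finset (Cand10 G h) := fun v =>
  match v with
  | Sum.inl (i, _) =>
      Finset.univ.filter fun cnd =>
        match cnd with
        | Sum.inl u => col u = i
        | _ => False
  | Sum.inr (Sum.inl e) =>
      Finset.univ.filter fun cnd =>
        match cnd with
        | Sum.inl u => u ∈ e.val
        | Sum.inr (Sum.inl e') => e' = e
        | Sum.inr (Sum.inr (Sum.inl _)) => True
        | Sum.inr (Sum.inr (Sum.inr _)) => False
  | Sum.inr (Sum.inr j) =>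
      Finset.univ.filter fun cnd =>
        match cnd with
        | Sum.inr (Sum.inr (Sum.inr j')) => j' = j
        | _ => False

/-!
With `|E| = 3h` there are `n = 3h²` voters and `k = 2h`, so the JR quota is `n/k = 3h/2`.
From a multicoloured independent set `I` take the vertex-candidates of `I` and the
edge-candidates of the edges avoiding `I`: these are `h + (3h - 2h) = 2h` candidates, every
colour- and edge-voter approves one of them, and filling-candidates have a single approver, so
JR holds; but the `3h = 2n/k` edge-voters jointly approve a dummy and, `I` being independent,
each approves at most one committee member, which violates 2-EJR+.
Conversely, JR puts a vertex-candidate of every colour into the committee (the `3h/2`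
colour-voters of that colour would otherwise be an unrepresented group). A violation of
EJR+ that JR does not already exclude needs a group of `ℓ·n/k ≥ 3h` voters with a common
candidate outside the committee, and only the dummies have that many approvers; then `ℓ = 2`,
so no edge-voter approves two committee members and the chosen vertices are independent.
-/

section Election

variable {N C : Type*} [Fintype N] {A : N → Finset C} {k t : ℕ}

@[simp] lemma mem_approvers {c : C} {i : N} : i ∈ approvers A c ↔ c ∈ A i := by
  simp [approvers]

variable [DecidableEq C] {W : Finset C}

lemma exists_inter_nonempty_of_satisfiesJR (hJR : satisfiesJR A k W) {c : C} (hc : c ∉ W)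
    {N' : Finset N} (hN' : N' ⊆ approvers A c)
    (hquota : ((1 : ℕ) * Fintype.card N : ℚ) / k ≤ N'.card) :
    ∃ i ∈ N', (A i ∩ W).Nonempty := by
  obtain ⟨i, hi, hcard⟩ := hJR c hc 1 le_rfl le_rfl N' hN' hquota
  exact ⟨i, hi, card_pos.1 hcard⟩

lemma satisfiesJR_of_represented_or_small (hquota : 0 < ((1 : ℕ) * Fintype.card N : ℚ) / k)
    (hrep : ∀ i, (A i ∩ W).Nonempty ∨
      ∀ c ∈ A i, ((approvers A c).card : ℚ) < ((1 : ℕ) * Fintype.card N : ℚ) / k) :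
    satisfiesJR A k W := by
  intro c _ ℓ hℓ hℓ1 N' hN' hcard
  obtain rfl : ℓ = 1 := le_antisymm hℓ1 hℓ
  obtain ⟨i, hi⟩ : N'.Nonempty := card_pos.1 (by exact_mod_cast hquota.trans_le hcard)
  refine ⟨i, hi, ?_⟩
  rcases hrep i with hne | hsmall
  · exact card_pos.2 hne
  · have hlt := hsmall c (mem_approvers.1 (hN' hi))
    have hle : (N'.card : ℚ) ≤ (approvers A c).card := by exact_mod_cast card_le_card hN'
    linarith

lemma not_satisfiesTEJRplus_of_approvers {c : C} (hc : c ∉ W) {ℓ : ℕ} (hℓ : 1 ≤ ℓ)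
    (hℓt : ℓ ≤ t) (hquota : (ℓ * Fintype.card N : ℚ) / k ≤ (approvers A c).card)
    (hfew : ∀ i ∈ approvers A c, (A i ∩ W).card < ℓ) : ¬ satisfiesTEJRplus A k t W := by
  intro hEJR
  obtain ⟨i, hi, hle⟩ := hEJR c hc ℓ hℓ hℓt _ subset_rfl hquota
  exact (hfew i hi).not_ge hle

lemma exists_violation_of_satisfiesJR (hJR : satisfiesJR A k W)
    (hEJR : ¬ satisfiesTEJRplus A k t W) :
    ∃ c ∉ W, ∃ ℓ : ℕ, 2 ≤ ℓ ∧ ∃ N' ⊆ approvers A c,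
      (ℓ * Fintype.card N : ℚ) / k ≤ N'.card ∧ ∀ i ∈ N', (A i ∩ W).card < ℓ := by
  unfold satisfiesTEJRplus at hEJR
  push Not at hEJR
  obtain ⟨c, hc, ℓ, hℓ, -, N', hN', hquota, hfew⟩ := hEJR
  refine ⟨c, hc, ℓ, ?_, N', hN', hquota, hfew⟩
  by_contra! hℓ2
  obtain rfl : ℓ = 1 := by omega
  obtain ⟨i, hi, hle⟩ := hJR c hc 1 le_rfl le_rfl N' hN' hquota
  exact (hfew i hi).not_ge hle

end Election

section Graph

lemma card_eq_mul_of_card_fiber_eq {α ι : Type*} [Fintype ι] [DecidableEq ι] {s : Finset α}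
    {f : α → ι} {m : ℕ} (hs : ∀ i, (s.filter fun a => f a = i).card = m) :
    s.card = Fintype.card ι * m := by
  rw [card_eq_sum_card_fiberwise (t := univ) fun a _ => mem_univ (f a)]
  simp [hs]

lemma card_univ_filter_subtype {α : Type*} (s : Finset α) (p : α → Prop) [DecidablePred p] :
    (univ.filter fun a : s => p a).card = (s.filter p).card := by
  rw [univ_eq_attach, filter_attach, card_map, card_attach]

variable {V : Type*} (G : SimpleGraph V)

lemma exists_rainbow_indep [DecidableEq V] {ι : Type*} [Fintype ι] [DecidableEq ι]
    (col : V → ι) {P : V → Prop} (hcol : ∀ i, ∃ u, col u = i ∧ P u)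
    (hind : ∀ u w, P u → P w → ¬ G.Adj u w) :
    ∃ I : Finset V, (∀ u ∈ I, ∀ w ∈ I, ¬ G.Adj u w) ∧
      ∀ i, (I.filter fun u => col u = i).card = 1 := by
  choose f hfcol hfP using hcol
  refine ⟨univ.image f, ?_, fun i => card_eq_one.2 ⟨f i, ?_⟩⟩
  · simp only [mem_image, mem_univ, true_and]
    rintro _ ⟨i, rfl⟩ _ ⟨j, rfl⟩
    exact hind _ _ (hfP i) (hfP j)
  · ext u
    simp only [mem_filter, mem_image, mem_univ, true_and, mem_singleton]
    constructor
    · rintro ⟨⟨j, rfl⟩, rfl⟩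
      rw [hfcol]
    · rintro rfl
      exact ⟨⟨i, rfl⟩, hfcol i⟩

variable [Fintype V] [DecidableRel G.Adj]

lemma card_edgeFinset_of_degree_eq_two (hreg : ∀ v, G.degree v = 2) :
    G.edgeFinset.card = Fintype.card V := by
  have := G.sum_degrees_eq_twice_card_edges
  simp only [hreg, sum_const, card_univ, smul_eq_mul] at this
  omega

lemma card_edgeFinset_filter_avoid [DecidableEq V] {I : Finset V}
    (hind : ∀ u ∈ I, ∀ w ∈ I, ¬ G.Adj u w) :
    (G.edgeFinset.filter fun e => ∀ u ∈ I, u ∉ e).card =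
      G.edgeFinset.card - ∑ u ∈ I, G.degree u := by
  have hmeet : G.edgeFinset.filter (fun e => ∀ u ∈ I, u ∉ e) =
      G.edgeFinset \ I.biUnion fun u => G.incidenceFinset u := by
    ext e
    simp +contextual [SimpleGraph.incidenceSet]
  have hdisj : (I : Set V).PairwiseDisjoint fun u => G.incidenceFinset u := by
    intro u hu w hw huw
    rw [Function.onFun, disjoint_left]
    intro e heu hew
    simp only [SimpleGraph.mem_incidenceFinset] at heu hew
    exact hind u hu w hw (G.adj_of_mem_incidenceSet huw heu hew)
  rw [hmeet, card_sdiff_of_subset, card_biUnion hdisj]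
  · simp [SimpleGraph.card_incidenceFinset_eq_degree]
  · exact biUnion_subset.2 fun u _ => G.incidenceFinset_subset u

end Graph

section Reduction

variable {V : Type*} [Fintype V] [DecidableEq V] (G : SimpleGraph V) [DecidableRel G.Adj]
  {h : ℕ} (col : V → Fin h)

lemma card_voter10 (hm : G.edgeFinset.card = 3 * h) (heven : Even h) :
    Fintype.card (Voter10 G h) = 3 * h * h := by
  obtain ⟨a, rfl⟩ := heven
  have hcard : Fintype.card (Voter10 G (a + a)) =
      (a + a) * (G.edgeFinset.card / 2) + (G.edgeFinset.card + fillCount G (a + a)) := by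
    simp only [Fintype.card_sum, Fintype.card_prod, Fintype.card_coe, Fintype.card_fin]
  have hsq : (3 * (a + a)) ^ 2 = 36 * (a * a) := by ring
  have hcolor : (a + a) * (3 * (a + a) / 2) = 6 * (a * a) := by
    rw [show 3 * (a + a) / 2 = 3 * a by omega]; ring
  have hedge : 3 * (a + a) * (a + a) = 12 * (a * a) := by ring
  have ha : a ≤ a * a := Nat.le_mul_self a
  rw [hcard, fillCount, hm, hsq, hcolor, hedge]
  omega

lemma quota_le_iff (hm : G.edgeFinset.card = 3 * h) (heven : Even h) (hh : 0 < h) (ℓ m : ℕ) :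
    (ℓ * Fintype.card (Voter10 G h) : ℚ) / ((G.edgeFinset.card - h : ℕ) : ℚ) ≤ m ↔
      3 * ℓ * h ≤ 2 * m := by
  have hhq : (0 : ℚ) < h := by exact_mod_cast hh
  rw [card_voter10 G hm heven, show G.edgeFinset.card - h = 2 * h by omega,
    div_le_iff₀ (by positivity)]
  push_cast
  rw [show (ℓ : ℚ) * (3 * h * h) = 3 * ℓ * h * h by ring,
    show (m : ℚ) * (2 * h) = 2 * m * h by ring, mul_le_mul_iff_left₀ hhq]
  norm_cast

lemma ballot10_fill (j : Fin (fillCount G h)) :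
    ballot10 G h col (.inr (.inr j)) = {.inr (.inr (.inr j))} := by
  ext (u | e | d | j') <;> simp [ballot10]

lemma approvers_edge (e : G.edgeFinset) :
    approvers (ballot10 G h col) (.inr (.inl e)) = {.inr (.inl e)} := by
  ext (⟨i, j⟩ | e' | j) <;> simp [ballot10]
  exact eq_comm

lemma approvers_fill (j : Fin (fillCount G h)) :
    approvers (ballot10 G h col) (.inr (.inr (.inr j))) = {.inr (.inr j)} := by
  ext (⟨i, j⟩ | e' | j') <;> simp [ballot10]
  exact eq_comm

lemma approvers_dummy (d : Fin 2) :
    approvers (ballot10 G h col) (.inr (.inr (.inl d))) =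
      univ.map (Function.Embedding.inl.trans Function.Embedding.inr) := by
  ext (⟨i, j⟩ | e | j) <;> simp [ballot10]

lemma card_approvers_dummy (d : Fin 2) :
    (approvers (ballot10 G h col) (.inr (.inr (.inl d)))).card = G.edgeFinset.card := by
  rw [approvers_dummy, card_map, card_univ, Fintype.card_coe]

lemma card_approvers_vertex_le (u : V) :
    (approvers (ballot10 G h col) (.inl u)).card ≤ G.edgeFinset.card / 2 + G.degree u := by
  have hsub : approvers (ballot10 G h col) (.inl u) ⊆
      univ.image (fun j => .inl (col u, j)) ∪
        (univ.filter fun e : G.edgeFinset => u ∈ e.val).image (.inr ∘ .inl) := by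
    rintro (⟨i, j⟩ | e | j) hv <;> simp_all [ballot10]
  calc _ ≤ _ := card_le_card hsub
    _ ≤ _ := card_union_le _ _
    _ ≤ _ := add_le_add card_image_le card_image_le
    _ = _ := by
      rw [card_univ, Fintype.card_fin, card_univ_filter_subtype G.edgeFinset (u ∈ ·),
        ← G.incidenceFinset_eq_filter, G.card_incidenceFinset_eq_degree]

noncomputable def committee (I : Finset V) : Finset (Cand10 G h) :=
  I.map .inl ∪ (univ.filter fun e : G.edgeFinset => ∀ u ∈ I, u ∉ e.val).map
    (Function.Embedding.inl.trans Function.Embedding.inr)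

variable {G}

@[simp] lemma inl_mem_committee {I : Finset V} {u : V} :
    (.inl u : Cand10 G h) ∈ committee G I ↔ u ∈ I := by
  simp [committee]

@[simp] lemma edge_mem_committee {I : Finset V} {e : G.edgeFinset} :
    (.inr (.inl e) : Cand10 G h) ∈ committee G I ↔ ∀ u ∈ I, u ∉ e.val := by
  simp [committee]

@[simp] lemma dummy_not_mem_committee {I : Finset V} {d : Fin 2} :
    (.inr (.inr (.inl d)) : Cand10 G h) ∉ committee G I := by
  simp [committee]

lemma card_committee {I : Finset V} (hind : ∀ u ∈ I, ∀ w ∈ I, ¬ G.Adj u w) :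
    (committee G I : Finset (Cand10 G h)).card =
      I.card + (G.edgeFinset.card - ∑ u ∈ I, G.degree u) := by
  rw [committee, card_union_of_disjoint (by simp [disjoint_left]), card_map, card_map,
    card_univ_filter_subtype G.edgeFinset (fun e => ∀ u ∈ I, u ∉ e),
    card_edgeFinset_filter_avoid G hind]

lemma card_edgeBallot_inter_committee_le_one {I : Finset V}
    (hind : ∀ u ∈ I, ∀ w ∈ I, ¬ G.Adj u w) (e : G.edgeFinset) :
    (ballot10 G h col (.inr (.inl e)) ∩ committee G I).card ≤ 1 := by
  by_cases hmeet : ∃ u ∈ I, u ∈ e.val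
  · obtain ⟨u, hu, hue⟩ := hmeet
    refine card_le_one_iff_subset_singleton.2 ⟨.inl u, ?_⟩
    rintro (w | e' | d | j) hx <;> simp [ballot10] at hx ⊢
    · by_contra hwu
      have he : e.val ∈ G.edgeSet := G.mem_edgeFinset.1 e.2
      exact hind w hx.2 u hu (G.adj_of_mem_incidenceSet hwu ⟨he, hx.1⟩ ⟨he, hue⟩)
    · exact hx.2 u hu (hx.1 ▸ hue)
  · push Not at hmeet
    refine card_le_one_iff_subset_singleton.2 ⟨.inr (.inl e), ?_⟩
    rintro (w | e' | d | j) hx <;> simp [ballot10] at hx ⊢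
    · exact hmeet w hx.2 hx.1
    · exact hx.1

lemma committee_satisfiesJR (hm : G.edgeFinset.card = 3 * h) (heven : Even h) (hh : 0 < h)
    {I : Finset V} (hI : ∀ i, (I.filter fun u => col u = i).card = 1) :
    satisfiesJR (ballot10 G h col) (G.edgeFinset.card - h) (committee G I) := by
  have hsmall (m : ℕ) : (m : ℚ) < ((1 : ℕ) * Fintype.card (Voter10 G h) : ℚ) /
      ((G.edgeFinset.card - h : ℕ) : ℚ) ↔ 2 * m < 3 * h := by
    simpa using (quota_le_iff G hm heven hh 1 m).not
  refine satisfiesJR_of_represented_or_small (by exact_mod_cast (hsmall 0).2 (by omega)) ?_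
  rintro (⟨i, j⟩ | e | j)
  · obtain ⟨u, hu⟩ := card_pos.1 (hI i ▸ one_pos)
    rw [mem_filter] at hu
    exact .inl ⟨.inl u, by simp [ballot10, hu.1, hu.2]⟩
  · refine .inl ?_
    by_cases hmeet : ∃ u ∈ I, u ∈ e.val
    · obtain ⟨u, hu, hue⟩ := hmeet
      exact ⟨.inl u, by simp [ballot10, hu, hue]⟩
    · push Not at hmeet
      exact ⟨.inr (.inl e), by simpa [ballot10] using hmeet⟩
  · refine .inr fun c hc => ?_
    rw [ballot10_fill, mem_singleton] at hc
    rw [hc, approvers_fill, card_singleton, Nat.cast_one]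
    exact (hsmall 1).2 (by omega)

lemma committee_not_satisfiesTEJRplus (hm : G.edgeFinset.card = 3 * h) (heven : Even h)
    (hh : 0 < h) {t : ℕ} (ht : 2 ≤ t) {I : Finset V}
    (hind : ∀ u ∈ I, ∀ w ∈ I, ¬ G.Adj u w) :
    ¬ satisfiesTEJRplus (ballot10 G h col) (G.edgeFinset.card - h) t (committee G I) := by
  refine not_satisfiesTEJRplus_of_approvers (c := .inr (.inr (.inl 0))) (ℓ := 2)
    dummy_not_mem_committee one_le_two ht ?_ ?_
  · rw [card_approvers_dummy, quota_le_iff G hm heven hh, hm]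
    omega
  · intro i hi
    rw [approvers_dummy, mem_map] at hi
    obtain ⟨e, -, rfl⟩ := hi
    exact (card_edgeBallot_inter_committee_le_one col hind e).trans_lt one_lt_two

lemma exists_vertex_mem_of_satisfiesJR (hm : G.edgeFinset.card = 3 * h) (heven : Even h)
    (hh : 0 < h) (hcol : ∀ i, (univ.filter fun u => col u = i).card = 3) {W : Finset (Cand10 G h)}
    (hJR : satisfiesJR (ballot10 G h col) (G.edgeFinset.card - h) W) (i : Fin h) :
    ∃ u, col u = i ∧ .inl u ∈ W := by
  obtain ⟨u₀, hu₀⟩ := card_pos.1 ((hcol i).symm ▸ three_pos)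
  by_contra! hnone
  set colorVoters : Finset (Voter10 G h) := univ.image fun j => .inl (i, j)
  have hsub : colorVoters ⊆ approvers (ballot10 G h col) (.inl u₀) := by
    simp_all [colorVoters, ballot10, subset_iff]
  have hquota : ((1 : ℕ) * Fintype.card (Voter10 G h) : ℚ) /
      ((G.edgeFinset.card - h : ℕ) : ℚ) ≤ colorVoters.card := by
    obtain ⟨a, rfl⟩ := heven
    rw [quota_le_iff G hm ⟨a, rfl⟩ hh,
      card_image_of_injective _ fun j j' hjj' => by simpa using hjj', card_univ,
      Fintype.card_fin, hm]
    omega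
  obtain ⟨v, hv, x, hx⟩ :=
    exists_inter_nonempty_of_satisfiesJR hJR (hnone u₀ (mem_filter.1 hu₀).2) hsub hquota
  obtain ⟨j, -, rfl⟩ := mem_image.1 hv
  rcases x with u | e | d | j' <;> simp [ballot10] at hx
  exact hnone u hx.1 hx.2

lemma card_edgeBallot_inter_lt_two (hm : G.edgeFinset.card = 3 * h) (heven : Even h)
    (hh2 : 2 ≤ h) (hreg : ∀ v, G.degree v = 2) {W : Finset (Cand10 G h)} {t : ℕ}
    (hJR : satisfiesJR (ballot10 G h col) (G.edgeFinset.card - h) W)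
    (hEJR : ¬ satisfiesTEJRplus (ballot10 G h col) (G.edgeFinset.card - h) t W)
    (e : G.edgeFinset) : (ballot10 G h col (.inr (.inl e)) ∩ W).card < 2 := by
  obtain ⟨c, hc, ℓ, hℓ, N', hN', hquota, hfew⟩ := exists_violation_of_satisfiesJR hJR hEJR
  rw [quota_le_iff G hm heven (by omega)] at hquota
  have hN'le := card_le_card hN'
  have hlarge : 3 * h ≤ N'.card := by nlinarith
  obtain ⟨d, rfl⟩ : ∃ d, c = .inr (.inr (.inl d)) := by
    rcases c with v | e | d | j
    · have := card_approvers_vertex_le G col v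
      rw [hreg] at this
      omega
    · rw [approvers_edge, card_singleton] at hN'le
      omega
    · exact ⟨d, rfl⟩
    · rw [approvers_fill, card_singleton] at hN'le
      omega
  rw [card_approvers_dummy, hm] at hN'le
  have hℓ2 : ℓ = 2 := by nlinarith
  have hN'all : N' = approvers (ballot10 G h col) (.inr (.inr (.inl d))) :=
    eq_of_subset_of_card_le hN' (by rw [card_approvers_dummy, hm]; omega)
  subst hℓ2
  exact hfew _ (by rw [hN'all, approvers_dummy]; exact mem_map_of_mem _ (mem_univ e))

variable {col}

lemma exists_committee_of_rainbow_indep (hm : G.edgeFinset.card = 3 * h) (heven : Even h)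
    (hh : 0 < h) (hreg : ∀ v, G.degree v = 2) {t : ℕ} (ht : 2 ≤ t) {I : Finset V}
    (hind : ∀ u ∈ I, ∀ w ∈ I, ¬ G.Adj u w)
    (hI : ∀ i, (I.filter fun u => col u = i).card = 1) :
    ∃ W : Finset (Cand10 G h), W.card = G.edgeFinset.card - h ∧
      satisfiesJR (ballot10 G h col) (G.edgeFinset.card - h) W ∧
      ¬ satisfiesTEJRplus (ballot10 G h col) (G.edgeFinset.card - h) t W := by
  have hIcard : I.card = h := by simpa using card_eq_mul_of_card_fiber_eq hI
  refine ⟨committee G I, ?_, committee_satisfiesJR col hm heven hh hI,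
    committee_not_satisfiesTEJRplus col hm heven hh ht hind⟩
  rw [card_committee hind, sum_congr rfl fun u _ => hreg u, sum_const, smul_eq_mul, hIcard]
  omega

lemma exists_rainbow_indep_of_violation (hm : G.edgeFinset.card = 3 * h) (heven : Even h)
    (hh2 : 2 ≤ h) (hreg : ∀ v, G.degree v = 2)
    (hcol : ∀ i, (univ.filter fun u => col u = i).card = 3) {W : Finset (Cand10 G h)} {t : ℕ}
    (hJR : satisfiesJR (ballot10 G h col) (G.edgeFinset.card - h) W)
    (hEJR : ¬ satisfiesTEJRplus (ballot10 G h col) (G.edgeFinset.card - h) t W) :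
    ∃ I : Finset V, (∀ u ∈ I, ∀ w ∈ I, ¬ G.Adj u w) ∧
      ∀ i, (I.filter fun u => col u = i).card = 1 := by
  refine exists_rainbow_indep G col
    (exists_vertex_mem_of_satisfiesJR col hm heven (by omega) hcol hJR) fun u w hu hw hadj => ?_
  let e : G.edgeFinset := ⟨s(u, w), G.mem_edgeFinset.2 hadj⟩
  have hpair : ({.inl u, .inl w} : Finset (Cand10 G h)) ⊆
      ballot10 G h col (.inr (.inl e)) ∩ W := by
    simp [insert_subset_iff, ballot10, e, hu, hw]
  have hle := card_le_card hpair
  rw [card_pair_eq_two_iff.2 (by simpa using hadj.ne)] at hle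
  have hlt := card_edgeBallot_inter_lt_two col hm heven hh2 hreg hJR hEJR e
  omega

lemma exists_rainbow_indep_iff_exists_committee (hm : G.edgeFinset.card = 3 * h)
    (heven : Even h) (hh2 : 2 ≤ h) (hreg : ∀ v, G.degree v = 2)
    (hcol : ∀ i, (univ.filter fun u => col u = i).card = 3) {t : ℕ} (ht : 2 ≤ t) :
    (∃ I : Finset V, (∀ u ∈ I, ∀ w ∈ I, ¬ G.Adj u w) ∧
        ∀ i, (I.filter fun u => col u = i).card = 1) ↔
      ∃ W : Finset (Cand10 G h), W.card = G.edgeFinset.card - h ∧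
        satisfiesJR (ballot10 G h col) (G.edgeFinset.card - h) W ∧
        ¬ satisfiesTEJRplus (ballot10 G h col) (G.edgeFinset.card - h) t W :=
  ⟨fun ⟨_, hind, hI⟩ => exists_committee_of_rainbow_indep hm heven (by omega) hreg ht hind hI,
    fun ⟨_, _, hJR, hEJR⟩ =>
      exists_rainbow_indep_of_violation hm heven hh2 hreg hcol hJR hEJR⟩

end Reduction

/-- Correctness of the reduction from Multicolor Independent Set (on 2-regular graphs
with an even number `h ≥ 2` of colors, each of size 3) to JR-not-EJR+: the graph `G`
has an independent set with exactly one vertex of each color iff the constructed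
election, with committee size `k = |E| − h`, admits a size-`k` committee satisfying JR
but not EJR+ — equivalently, satisfying JR but violating `2`-EJR+. -/
theorem stmt10 {V : Type*} [Fintype V] [DecidableEq V]
    (G : SimpleGraph V) [DecidableRel G.Adj]
    (h : ℕ) (hh2 : 2 ≤ h) (hheven : Even h) (col : V → Fin h)
    (hreg : ∀ v : V, G.degree v = 2)
    (hcol : ∀ i : Fin h, (Finset.univ.filter fun u => col u = i).card = 3) :
    ((∃ I : Finset V, (∀ u ∈ I, ∀ w ∈ I, ¬ G.Adj u w) ∧
        ∀ i : Fin h, (I.filter fun u => col u = i).card = 1) ↔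
      (∃ W : Finset (Cand10 G h), W.card = G.edgeFinset.card - h ∧
        satisfiesJR (ballot10 G h col) (G.edgeFinset.card - h) W ∧
        ¬ satisfiesTEJRplus (ballot10 G h col) (G.edgeFinset.card - h)
            (G.edgeFinset.card - h) W)) ∧
    ((∃ I : Finset V, (∀ u ∈ I, ∀ w ∈ I, ¬ G.Adj u w) ∧
        ∀ i : Fin h, (I.filter fun u => col u = i).card = 1) ↔
      (∃ W : Finset (Cand10 G h), W.card = G.edgeFinset.card - h ∧
        satisfiesJR (ballot10 G h col) (G.edgeFinset.card - h) W ∧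
        ¬ satisfiesTEJRplus (ballot10 G h col) (G.edgeFinset.card - h) 2 W)) := by
  have hm : G.edgeFinset.card = 3 * h := by
    rw [card_edgeFinset_of_degree_eq_two G hreg, ← card_univ, card_eq_mul_of_card_fiber_eq hcol,
      Fintype.card_fin, mul_comm]
  exact ⟨exists_rainbow_indep_iff_exists_committee hm hheven hh2 hreg hcol (by omega),
    exists_rainbow_indep_iff_exists_committee hm hheven hh2 hreg hcol le_rfl⟩
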